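/- Let a < b be real numbers, let f be (Lebesgue) integrable on (a,b), and let φ : [a,b] → ℝ be continuously differentiable. If φ′ vanishes at only finitely many points of [a,b], then ∫_a^b f(t)·exp(i·x·φ(t)) dt → 0 as x → +∞. -/

import Mathlib

open MeasureTheory Filter Real

noncomputable section

/-- The number of standard Young tableaux of shape `μ`: bijective fillings of the cells
with `0, …, n-1` that increase along rows and down columns. -/
def stdCount (μ : YoungDiagram) : ℕ :=
  Nat.card {T : {c : ℕ × ℕ // c ∈ μ} → Fin μ.card //
    Function.Bijective T ∧
    (∀ (a b : ℕ) (h : (a, b) ∈ μ) (h' : (a + 1, b) ∈ μ),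
        T ⟨(a, b), h⟩ < T ⟨(a + 1, b), h'⟩) ∧
    (∀ (a b : ℕ) (h : (a, b) ∈ μ) (h' : (a, b + 1) ∈ μ),
        T ⟨(a, b), h⟩ < T ⟨(a, b + 1), h'⟩)}

/-- The Poissonised Plancherel weight of a partition (Young diagram). -/
def plancherelP (t : ℝ) (μ : YoungDiagram) : ℝ :=
  Real.exp (-t) * t ^ μ.card * ((stdCount μ : ℝ) / (Nat.factorial μ.card)) ^ 2

/-- Number of `i`-nodes of `μ` : cells `(a,b)` with `b - a ≡ i (mod e)`. -/
def cNodes (e : ℕ) (i : ZMod e) (μ : YoungDiagram) : ℕ :=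
  (μ.cells.filter fun c => (((c.2 : ℤ) - (c.1 : ℤ)) : ZMod e) = i).card

/-- `x_i(λ) = c_i(λ) - c_{i+1}(λ)`. -/
def xVar (e : ℕ) (i : ZMod e) (μ : YoungDiagram) : ℤ :=
  (cNodes e i μ : ℤ) - (cNodes e (i + 1) μ : ℤ)

/-- Size of the `e`-core, via `|λ̄| = (e/2) Σ_i x_i(λ)² + Σ_{i=0}^{e-1} i·x_i(λ)`. -/
def coreSize (e : ℕ) (μ : YoungDiagram) : ℝ :=
  (e : ℝ) / 2 * ∑ i ∈ Finset.range e, ((xVar e (i : ZMod e) μ : ℝ)) ^ 2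
    + ∑ i ∈ Finset.range e, (i : ℝ) * (xVar e (i : ZMod e) μ : ℝ)

/-- Expectation under the Poissonised Plancherel measure. -/
def expT (t : ℝ) (f : YoungDiagram → ℝ) : ℝ := ∑' μ : YoungDiagram, plancherelP t μ * f μ

/-- Covariance under the Poissonised Plancherel measure. -/
def covT (t : ℝ) (f g : YoungDiagram → ℝ) : ℝ :=
  expT t (fun μ => f μ * g μ) - expT t f * expT t g

/-- The descent set `D(λ) = {λ_a - a : a ≥ 1} ⊆ ℤ`. -/
def descents (μ : YoungDiagram) : Set ℤ :=
  {d | ∃ a : ℕ, d = (μ.rowLen a : ℤ) - (a : ℤ) - 1}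

/-- Correlation function `ρ^t(k) = Pl^t{λ : k ∈ D(λ)}`. -/
def rho (t : ℝ) (k : ℤ) : ℝ :=
  ∑' μ : {μ : YoungDiagram // k ∈ descents μ}, plancherelP t μ.1

/-- Bessel function of the first kind of integer order. -/
def besselJ (n : ℤ) (x : ℝ) : ℝ :=
  if 0 ≤ n then
    ∑' k : ℕ, (-1 : ℝ) ^ k * (x / 2) ^ (n.toNat + 2 * k) /
      (Nat.factorial k * Nat.factorial (n.toNat + k))
  else
    (-1 : ℝ) ^ n.natAbs * ∑' k : ℕ, (-1 : ℝ) ^ k * (x / 2) ^ (n.natAbs + 2 * k) /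
      (Nat.factorial k * Nat.factorial (n.natAbs + k))

/-- The discrete Bessel kernel `𝕁(x,y)`. -/
def kernelJ (t : ℝ) (x y : ℤ) : ℝ :=
  Real.sqrt t * (besselJ x (2 * Real.sqrt t) * besselJ (y + 1) (2 * Real.sqrt t)
    - besselJ (x + 1) (2 * Real.sqrt t) * besselJ y (2 * Real.sqrt t)) / ((x : ℝ) - (y : ℝ))


/-- Variance under the Poissonised Plancherel measure. -/
def varT (t : ℝ) (f : YoungDiagram → ℝ) : ℝ :=
  expT t (fun μ => f μ ^ 2) - (expT t f) ^ 2

section RLaux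
open Set

lemma normF (f : ℝ → ℂ) (φ : ℝ → ℝ) (x u : ℝ) :
    ‖f u * Complex.exp ((((x * φ u : ℝ)) : ℂ) * Complex.I)‖ = ‖f u‖ := by
  rw [norm_mul, Complex.norm_exp_ofReal_mul_I, mul_one]

lemma integrableF {c d : ℝ} {f : ℝ → ℂ} {φ : ℝ → ℝ} (hf : IntegrableOn f (Set.Ioo c d))
    (hφc : ContinuousOn φ (Set.Ioo c d)) (x : ℝ) :
    IntegrableOn (fun u => f u * Complex.exp ((((x * φ u : ℝ)) : ℂ) * Complex.I))
      (Set.Ioo c d) := by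
  have hm : AEStronglyMeasurable (fun u => Complex.exp ((((x * φ u : ℝ)) : ℂ) * Complex.I))
      (volume.restrict (Set.Ioo c d)) := by
    apply ContinuousOn.aestronglyMeasurable _ measurableSet_Ioo
    exact Complex.continuous_exp.comp_continuousOn
      ((Complex.continuous_ofReal.comp_continuousOn (continuousOn_const.mul hφc)).mul
        continuousOn_const)
  have := hf.bdd_mul hm (c := 1) (Filter.Eventually.of_forall fun u => by
    rw [Complex.norm_exp_ofReal_mul_I])
  exact this.congr (Filter.Eventually.of_forall fun u => mul_comm _ _)

lemma RL_core (c d : ℝ) (hcd : c < d) (f : ℝ → ℂ)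
    (φ φ' : ℝ → ℝ) (hφ : ∀ u ∈ Set.Icc c d, HasDerivAt φ (φ' u) u)
    (hφ'c : ContinuousOn φ' (Set.Icc c d))
    (hne : ∀ u ∈ Set.Icc c d, φ' u ≠ 0) :
    Tendsto (fun x : ℝ =>
        ∫ u in Set.Ioo c d, f u * Complex.exp ((((x * φ u : ℝ)) : ℂ) * Complex.I))
      atTop (nhds 0) := by
  set s : Set ℝ := Set.Icc c d with hs_def
  have hs : MeasurableSet s := measurableSet_Icc
  have hcont : ContinuousOn φ s := fun u hu => (hφ u hu).continuousAt.continuousWithinAt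
  have hder : ∀ u ∈ s, HasDerivWithinAt φ (φ' u) s u := fun u hu => (hφ u hu).hasDerivWithinAt
  -- sign dichotomy
  have hsign : (∀ u ∈ s, 0 < φ' u) ∨ (∀ u ∈ s, φ' u < 0) := by
    by_contra h
    push_neg at h
    obtain ⟨⟨u, hu, hu'⟩, ⟨v, hv, hv'⟩⟩ := h
    have hu0 : φ' u < 0 := lt_of_le_of_ne hu' (hne u hu)
    have hv0 : 0 < φ' v := lt_of_le_of_ne hv' (Ne.symm (hne v hv))
    have hsub : Set.uIcc u v ⊆ s := Set.uIcc_subset_Icc hu hv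
    have := intermediate_value_uIcc (hφ'c.mono hsub)
    have h0 : (0:ℝ) ∈ Set.uIcc (φ' u) (φ' v) := by
      rw [Set.mem_uIcc]; exact Or.inl ⟨hu0.le, hv0.le⟩
    obtain ⟨w, hw, hw0⟩ := this h0
    exact hne w (hsub hw) hw0
  have hinj : Set.InjOn φ s := by
    rcases hsign with hpos | hneg
    · refine (strictMonoOn_of_deriv_pos (convex_Icc c d) hcont ?_).injOn
      intro x hx
      rw [interior_Icc] at hx
      rw [(hφ x (Set.Ioo_subset_Icc_self hx)).deriv]
      exact hpos x (Set.Ioo_subset_Icc_self hx)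
    · refine (strictAntiOn_of_deriv_neg (convex_Icc c d) hcont ?_).injOn
      intro x hx
      rw [interior_Icc] at hx
      rw [(hφ x (Set.Ioo_subset_Icc_self hx)).deriv]
      exact hneg x (Set.Ioo_subset_Icc_self hx)
  set ψ : ℝ → ℝ := Function.invFunOn φ s with hψ_def
  have hψ : ∀ u ∈ s, ψ (φ u) = u := fun u hu => hinj.leftInvOn_invFunOn hu
  set g : ℝ → ℂ := fun y => (|φ' (ψ y)|⁻¹ : ℝ) • f (ψ y) with hg_def
  have ht : MeasurableSet (φ '' s) := by
    rw [hcont.image_Icc hcd.le]; exact measurableSet_Icc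
  set h : ℝ → ℂ := Set.indicator (φ '' s) g with hh_def
  have key : ∀ x : ℝ,
      (∫ u in Set.Ioo c d, f u * Complex.exp ((((x * φ u : ℝ)) : ℂ) * Complex.I))
        = ∫ v : ℝ, Real.fourierChar (-(v * (-(x / (2 * π))))) • h v := by
    intro x
    have step1 : (∫ u in Set.Ioo c d, f u * Complex.exp ((((x * φ u : ℝ)) : ℂ) * Complex.I))
        = ∫ u in s, f u * Complex.exp ((((x * φ u : ℝ)) : ℂ) * Complex.I) :=
      setIntegral_congr_set Ioo_ae_eq_Icc
    have step2 : (∫ y in φ '' s, g y * Complex.exp ((((x * y : ℝ)) : ℂ) * Complex.I))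
        = ∫ u in s, |φ' u| • (g (φ u) * Complex.exp ((((x * φ u : ℝ)) : ℂ) * Complex.I)) := by
      exact integral_image_eq_integral_abs_deriv_smul hs hder hinj _
    have step3 : ∀ u ∈ s, |φ' u| • (g (φ u) * Complex.exp ((((x * φ u : ℝ)) : ℂ) * Complex.I))
        = f u * Complex.exp ((((x * φ u : ℝ)) : ℂ) * Complex.I) := by
      intro u hu
      rw [← smul_mul_assoc]
      congr 1
      rw [hg_def]
      simp only [hψ u hu]
      rw [smul_smul]
      rw [mul_inv_cancel₀ (abs_ne_zero.2 (hne u hu)), one_smul]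
    have step4 : ∀ v : ℝ, Real.fourierChar (-(v * (-(x / (2 * π))))) • h v
        = Set.indicator (φ '' s) (fun y => g y * Complex.exp ((((x * y : ℝ)) : ℂ) * Complex.I)) v := by
      intro v
      by_cases hv : v ∈ φ '' s
      · rw [hh_def, Set.indicator_of_mem hv, Set.indicator_of_mem hv]
        rw [Circle.smul_def, Real.fourierChar_apply]
        have h2 : 2 * π * -(v * -(x / (2 * π))) = x * v := by
          field_simp
        rw [h2, smul_eq_mul, mul_comm]
      · rw [hh_def, Set.indicator_of_notMem hv, Set.indicator_of_notMem hv, smul_zero]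
    rw [step1, ← (setIntegral_congr_fun hs step3), ← step2]
    rw [← integral_indicator ht]
    exact (integral_congr_ae (Filter.Eventually.of_forall step4)).symm
  have hw : Tendsto (fun x : ℝ => -(x / (2 * π))) atTop (cocompact ℝ) := by
    rw [cocompact_eq_atBot_atTop]
    refine Filter.Tendsto.mono_right ?_ le_sup_left
    exact tendsto_neg_atTop_atBot.comp (tendsto_id.atTop_div_const (by positivity))
  have := (Real.tendsto_integral_exp_smul_cocompact h).comp hw
  exact this.congr (fun x => (key x).symm)

lemma RL_open (c d : ℝ) (hcd : c < d) (f : ℝ → ℂ) (hf : IntegrableOn f (Set.Ioo c d))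
    (φ φ' : ℝ → ℝ) (hφ : ∀ u ∈ Set.Icc c d, HasDerivAt φ (φ' u) u)
    (hφ'c : ContinuousOn φ' (Set.Icc c d))
    (hne : ∀ u ∈ Set.Ioo c d, φ' u ≠ 0) :
    Tendsto (fun x : ℝ =>
        ∫ u in Set.Ioo c d, f u * Complex.exp ((((x * φ u : ℝ)) : ℂ) * Complex.I))
      atTop (nhds 0) := by
  have hφc : ContinuousOn φ (Set.Icc c d) := fun u hu => (hφ u hu).continuousAt.continuousWithinAt
  rw [NormedAddCommGroup.tendsto_nhds_zero]
  intro ε hε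
  set r : ℝ := (d - c) / 3 with hr_def
  have hr : 0 < r := by simp only [hr_def]; linarith
  set t : ℕ → Set ℝ := fun n => Set.Ioo (c + r / (n + 1)) (d - r / (n + 1)) with ht_def
  have hmono : Monotone t := by
    intro m n hmn
    apply Set.Ioo_subset_Ioo
    · have : r / (n + 1 : ℝ) ≤ r / (m + 1 : ℝ) := by
        apply div_le_div_of_nonneg_left hr.le (by positivity)
        exact_mod_cast Nat.succ_le_succ hmn
      linarith
    · have : r / (n + 1 : ℝ) ≤ r / (m + 1 : ℝ) := by
        apply div_le_div_of_nonneg_left hr.le (by positivity)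
        exact_mod_cast Nat.succ_le_succ hmn
      linarith
  have hsubt : ∀ n, t n ⊆ Set.Ioo c d := by
    intro n
    apply Set.Ioo_subset_Ioo <;> [skip; skip] <;>
      · have : 0 < r / (n + 1 : ℝ) := by positivity
        linarith
  have hunion : (⋃ n, t n) = Set.Ioo c d := by
    apply Set.Subset.antisymm (Set.iUnion_subset hsubt)
    intro u hu
    have hm : 0 < min (u - c) (d - u) := lt_min (by linarith [hu.1]) (by linarith [hu.2])
    obtain ⟨n, hn⟩ := exists_nat_gt (r / min (u - c) (d - u))
    have h1 : r / min (u - c) (d - u) < (n : ℝ) + 1 := hn.trans (lt_add_one _)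
    rw [div_lt_iff₀ hm] at h1
    have h2 : r / ((n : ℝ) + 1) < min (u - c) (d - u) := by
      rw [div_lt_iff₀ (by positivity)]
      nlinarith [min_le_left (u - c) (d - u)]
    refine Set.mem_iUnion.2 ⟨n, ?_, ?_⟩
    · have := h2.trans_le (min_le_left _ _); linarith
    · have := h2.trans_le (min_le_right _ _); linarith
  have hIm := tendsto_setIntegral_of_monotone (fun n => measurableSet_Ioo) hmono
    (μ := volume) (f := fun u => ‖f u‖) (by rw [hunion]; exact hf.norm)
  rw [hunion] at hIm
  obtain ⟨N, hN⟩ := Metric.tendsto_atTop.mp hIm (ε / 2) (by positivity)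
  have hdist := hN N le_rfl
  rw [Real.dist_eq] at hdist
  have htail : ∫ u in Set.Ioo c d \ t N, ‖f u‖ < ε / 2 := by
    rw [integral_diff measurableSet_Ioo hf.norm (hsubt N)]
    have := abs_lt.mp hdist
    linarith [this.1]
  -- core convergence on t N
  set c' : ℝ := c + r / (N + 1) with hc'
  set d' : ℝ := d - r / (N + 1) with hd'
  have hc'd' : c' < d' := by
    have h1 : r / ((N : ℝ) + 1) ≤ r := by
      rw [div_le_iff₀ (by positivity)]
      nlinarith
    simp only [hc', hd', hr_def] at *
    linarith
  have hIccsub : Set.Icc c' d' ⊆ Set.Ioo c d := by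
    rw [hc', hd']
    intro u hu
    obtain ⟨h1, h2⟩ := hu
    have h0 : 0 < r / ((N : ℝ) + 1) := by positivity
    exact ⟨by linarith, by linarith⟩
  have hcore := RL_core c' d' hc'd' f φ φ'
    (fun u hu => hφ u (Set.Ioo_subset_Icc_self (hIccsub hu)))
    (hφ'c.mono fun u hu => Set.Ioo_subset_Icc_self (hIccsub hu))
    (fun u hu => hne u (hIccsub hu))
  rw [NormedAddCommGroup.tendsto_nhds_zero] at hcore
  filter_upwards [hcore (ε / 2) (by positivity)] with x hx
  have hfe := integrableF hf (hφc.mono Set.Ioo_subset_Icc_self) x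
  have hdiffint : ∫ u in Set.Ioo c d \ t N,
        f u * Complex.exp ((((x * φ u : ℝ)) : ℂ) * Complex.I)
      = (∫ u in Set.Ioo c d, f u * Complex.exp ((((x * φ u : ℝ)) : ℂ) * Complex.I))
        - ∫ u in t N, f u * Complex.exp ((((x * φ u : ℝ)) : ℂ) * Complex.I) :=
    integral_diff measurableSet_Ioo hfe (hsubt N)
  have hsplit : (∫ u in Set.Ioo c d, f u * Complex.exp ((((x * φ u : ℝ)) : ℂ) * Complex.I))
      = (∫ u in t N, f u * Complex.exp ((((x * φ u : ℝ)) : ℂ) * Complex.I))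
        + ∫ u in Set.Ioo c d \ t N, f u * Complex.exp ((((x * φ u : ℝ)) : ℂ) * Complex.I) := by
    rw [hdiffint]; ring
  rw [hsplit]
  have hb1 : ‖∫ u in Set.Ioo c d \ t N,
      f u * Complex.exp ((((x * φ u : ℝ)) : ℂ) * Complex.I)‖ ≤
      ∫ u in Set.Ioo c d \ t N, ‖f u‖ := by
    refine (norm_integral_le_integral_norm _).trans_eq ?_
    refine setIntegral_congr_fun (measurableSet_Ioo.diff measurableSet_Ioo) ?_
    intro u _
    exact normF f φ x u
  calc ‖(∫ u in t N, f u * Complex.exp ((((x * φ u : ℝ)) : ℂ) * Complex.I))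
        + ∫ u in Set.Ioo c d \ t N, f u * Complex.exp ((((x * φ u : ℝ)) : ℂ) * Complex.I)‖
      ≤ ‖∫ u in t N, f u * Complex.exp ((((x * φ u : ℝ)) : ℂ) * Complex.I)‖
        + ‖∫ u in Set.Ioo c d \ t N, f u * Complex.exp ((((x * φ u : ℝ)) : ℂ) * Complex.I)‖ :=
        norm_add_le _ _
    _ < ε / 2 + ε / 2 := by
        apply add_lt_add_of_lt_of_le hx (hb1.trans htail.le) |>.trans_le le_rfl
    _ = ε := by ring

lemma RL_split (a b : ℝ) (f : ℝ → ℂ) (φ φ' : ℝ → ℝ)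
    (hφ : ∀ u ∈ Set.Icc a b, HasDerivAt φ (φ' u) u)
    (hφ'c : ContinuousOn φ' (Set.Icc a b)) :
    ∀ n : ℕ, ∀ c d : ℝ, c < d → Set.Icc c d ⊆ Set.Icc a b →
    IntegrableOn f (Set.Ioo c d) →
    {u ∈ Set.Ioo c d | φ' u = 0}.Finite → {u ∈ Set.Ioo c d | φ' u = 0}.ncard ≤ n →
    Tendsto (fun x : ℝ =>
        ∫ u in Set.Ioo c d, f u * Complex.exp ((((x * φ u : ℝ)) : ℂ) * Complex.I))
      atTop (nhds 0) := by
  intro n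
  induction n with
  | zero =>
    intro c d hcd hsub hf hfin hcard
    have hz : {u ∈ Set.Ioo c d | φ' u = 0} = ∅ :=
      (Set.ncard_eq_zero hfin).mp (Nat.le_zero.mp hcard)
    refine RL_open c d hcd f hf φ φ' (fun u hu => hφ u (hsub hu))
      (hφ'c.mono hsub) (fun u hu h0 => ?_)
    exact absurd (show u ∈ {u | u ∈ Set.Ioo c d ∧ φ' u = 0} from ⟨hu, h0⟩)
      (by rw [hz]; exact Set.notMem_empty u)
  | succ n ih =>
    intro c d hcd hsub hf hfin hcard
    by_cases hz : {u ∈ Set.Ioo c d | φ' u = 0} = ∅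
    · refine RL_open c d hcd f hf φ φ' (fun u hu => hφ u (hsub hu))
        (hφ'c.mono hsub) (fun u hu h0 => ?_)
      exact absurd (show u ∈ {u | u ∈ Set.Ioo c d ∧ φ' u = 0} from ⟨hu, h0⟩)
        (by rw [hz]; exact Set.notMem_empty u)
    · obtain ⟨z, hzmem⟩ := Set.nonempty_iff_ne_empty.mpr hz
      have hz1 : z ∈ Set.Ioo c d := hzmem.1
      have hczsub : Set.Ioo c z ⊆ Set.Ioo c d := Set.Ioo_subset_Ioo le_rfl hz1.2.le
      have hzdsub : Set.Ioo z d ⊆ Set.Ioo c d := Set.Ioo_subset_Ioo hz1.1.le le_rfl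
      have hIcc1 : Set.Icc c z ⊆ Set.Icc a b :=
        (Set.Icc_subset_Icc le_rfl hz1.2.le).trans hsub
      have hIcc2 : Set.Icc z d ⊆ Set.Icc a b :=
        (Set.Icc_subset_Icc hz1.1.le le_rfl).trans hsub
      have hcard1 : {u ∈ Set.Ioo c z | φ' u = 0}.ncard ≤ n := by
        have hss : {u ∈ Set.Ioo c z | φ' u = 0} ⊆ {u ∈ Set.Ioo c d | φ' u = 0} \ {z} :=
          fun u hu => ⟨⟨hczsub hu.1, hu.2⟩, fun h => absurd (h ▸ hu.1.2) (lt_irrefl z)⟩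
        have h1 := Set.ncard_le_ncard hss hfin.diff
        rw [Set.ncard_diff_singleton_of_mem hzmem] at h1
        omega
      have hcard2 : {u ∈ Set.Ioo z d | φ' u = 0}.ncard ≤ n := by
        have hss : {u ∈ Set.Ioo z d | φ' u = 0} ⊆ {u ∈ Set.Ioo c d | φ' u = 0} \ {z} :=
          fun u hu => ⟨⟨hzdsub hu.1, hu.2⟩, fun h => absurd (h ▸ hu.1.1) (lt_irrefl z)⟩
        have h1 := Set.ncard_le_ncard hss hfin.diff
        rw [Set.ncard_diff_singleton_of_mem hzmem] at h1
        omega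
      have hfin1 : {u ∈ Set.Ioo c z | φ' u = 0}.Finite :=
        hfin.subset fun u hu => ⟨hczsub hu.1, hu.2⟩
      have hfin2 : {u ∈ Set.Ioo z d | φ' u = 0}.Finite :=
        hfin.subset fun u hu => ⟨hzdsub hu.1, hu.2⟩
      have T1 := ih c z hz1.1 hIcc1 (hf.mono_set hczsub) hfin1 hcard1
      have T2 := ih z d hz1.2 hIcc2 (hf.mono_set hzdsub) hfin2 hcard2
      have hφc : ContinuousOn φ (Set.Ioo c d) := fun u hu =>
        (hφ u (hsub (Set.Ioo_subset_Icc_self hu))).continuousAt.continuousWithinAt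
      have hsplit : ∀ x : ℝ,
          (∫ u in Set.Ioo c d, f u * Complex.exp ((((x * φ u : ℝ)) : ℂ) * Complex.I))
          = (∫ u in Set.Ioo c z, f u * Complex.exp ((((x * φ u : ℝ)) : ℂ) * Complex.I))
            + ∫ u in Set.Ioo z d, f u * Complex.exp ((((x * φ u : ℝ)) : ℂ) * Complex.I) := by
        intro x
        have hfe := integrableF hf hφc x
        have hU : Set.Ioc c z ∪ Set.Ioo z d = Set.Ioo c d :=
          Set.Ioc_union_Ioo_eq_Ioo hz1.1.le hz1.2
        have hdisj : Disjoint (Set.Ioc c z) (Set.Ioo z d) := by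
          rw [Set.disjoint_left]
          rintro u ⟨_, h1⟩ ⟨h2, _⟩
          exact absurd (h1.trans_lt h2) (lt_irrefl u)
        have hIocsub : Set.Ioc c z ⊆ Set.Ioo c d := fun u hu => ⟨hu.1, hu.2.trans_lt hz1.2⟩
        rw [← hU, setIntegral_union hdisj measurableSet_Ioo
          (hfe.mono_set hIocsub) (hfe.mono_set hzdsub)]
        congr 1
        exact setIntegral_congr_set Ioo_ae_eq_Ioc.symm
      have := T1.add T2
      rw [add_zero] at this
      exact this.congr fun x => (hsplit x).symm


end RLaux

/-- Riemann–Lebesgue lemma with a nonlinear phase: if `f` is integrable on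
`(a,b)`, `φ` is continuously differentiable on `[a,b]` and `φ'` vanishes at only finitely
many points of `[a,b]`, then `∫_a^b f(t)·exp(i·x·φ(t)) dt → 0` as `x → +∞`. -/
theorem riemann_lebesgue_nonlinear_phase (a b : ℝ) (hab : a < b)
    (f : ℝ → ℂ) (hf : MeasureTheory.IntegrableOn f (Set.Ioo a b))
    (φ φ' : ℝ → ℝ)
    (hφ : ∀ u ∈ Set.Icc a b, HasDerivAt φ (φ' u) u)
    (hφ' : ContinuousOn φ' (Set.Icc a b))
    (hfin : {u ∈ Set.Icc a b | φ' u = 0}.Finite) :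
    Filter.Tendsto (fun x : ℝ =>
        ∫ u in Set.Ioo a b, f u * Complex.exp ((((x * φ u : ℝ)) : ℂ) * Complex.I))
      atTop (nhds 0) := by
  have hφ2 : ∀ u ∈ Set.Icc a b, HasDerivAt φ (φ' u) u := hφ
  have hfin' : {u ∈ Set.Ioo a b | φ' u = 0}.Finite :=
    hfin.subset fun u hu => ⟨Set.Ioo_subset_Icc_self hu.1, hu.2⟩
  exact RL_split a b f φ φ' hφ2 hφ' {u ∈ Set.Ioo a b | φ' u = 0}.ncard a b hab
    (le_refl _) hf hfin' le_rfl

end
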